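/- arXiv:1704.05383 — 2 statements merged into one kernel-verified Lean document; each statement's English description precedes it below -/
import Mathlib

section
/- Let L, C ≥ 0 and let ψ : [α, T] → [0, ∞) be continuous satisfying ψ(t) ≤ C + L∫_α^t ψ(s) ds + L∫_α^t ∫_α^s ψ(r) dr ds + L∫_α^t ∫_α^s ∫_α^r ψ(τ) dτ dr ds for all t ∈ [α, T]. Then there exists a constant K depending only on L and T − α (not on C or ψ) such that sup_{t ∈ [α,T]} ψ(t) ≤ K·C. -/
open Set Filter Topology MeasureTheory intervalIntegral Real

/-!
Since `ψ ≥ 0`, its primitive `I t = ∫_α^t ψ` is nondecreasing on `[α, T]`, so each iterated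
integral up to `t` is at most a power of `T - α` times `I t`. This collapses the hypothesis into
the linear integral inequality `ψ t ≤ C + M * I t` with `M = L + L²(T-α)² + L³(T-α)⁵`, and
Gronwall's inequality gives `ψ t ≤ C * exp (M * (T - α))`.
-/

theorem intervalIntegral.integral_le_sub_mul_of_le {f : ℝ → ℝ} {a b c : ℝ} (hab : a ≤ b)
    (hc : 0 ≤ c) (h : ∀ x ∈ Icc a b, f x ≤ c) : ∫ x in a..b, f x ≤ (b - a) * c := by
  by_cases hf : IntervalIntegrable f volume a b
  · calc ∫ x in a..b, f x ≤ ∫ _ in a..b, c := integral_mono_on hab hf intervalIntegrable_const h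
      _ = (b - a) * c := by rw [intervalIntegral.integral_const, smul_eq_mul]
  · rw [integral_undef hf]
    exact mul_nonneg (sub_nonneg.2 hab) hc

theorem le_mul_exp_of_le_add_mul_integral {f : ℝ → ℝ} {a b C K : ℝ} (hK : 0 ≤ K)
    (hf : ContinuousOn f (Icc a b)) (h : ∀ t ∈ Icc a b, f t ≤ C + K * ∫ s in a..t, f s) :
    ∀ t ∈ Icc a b, f t ≤ C * exp (K * (t - a)) := by
  intro t ht
  have hab : a ≤ b := ht.1.trans ht.2
  set F : ℝ → ℝ := fun t => C + K * ∫ s in a..t, f s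
  have hF : ContinuousOn F (Icc a b) := by
    refine continuousOn_const.add (continuousOn_const.mul ?_)
    simpa only [uIcc_of_le hab] using
      continuousOn_primitive_interval' (hf.intervalIntegrable_of_Icc hab) left_mem_uIcc
  have hF' : ∀ x ∈ Ico a b, HasDerivWithinAt F (K * f x) (Ici x) x := by
    intro x hx
    have hIcc : Icc a b ∈ 𝓝[>] x := mem_nhdsWithin.2
      ⟨Iio b, isOpen_Iio, hx.2, fun y hy => ⟨hx.1.trans hy.2.le, hy.1.le⟩⟩
    have hmeas : StronglyMeasurableAtFilter f (𝓝[>] x) :=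
      (hf.stronglyMeasurableAtFilter_nhdsWithin measurableSet_Icc x).filter_mono
        (nhdsWithin_le_of_mem hIcc)
    exact ((integral_hasDerivWithinAt_right (s := Ici x) (t := Ioi x)
      ((hf.mono (Icc_subset_Icc_right hx.2.le)).intervalIntegrable_of_Icc hx.1)
      hmeas ((hf x (Ico_subset_Icc_self hx)).mono_of_mem_nhdsWithin hIcc)).const_mul K).const_add C
  have hbound := le_gronwallBound_of_liminf_deriv_right_le (δ := C) (K := K) (ε := 0) hF
    (fun x hx _ hr => (hF' x hx).liminf_right_slope_le hr) (by simp [F])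
    (fun x hx => by simpa using mul_le_mul_of_nonneg_left (h x (Ico_subset_Icc_self hx)) hK) t ht
  rw [gronwallBound_ε0] at hbound
  exact (h t ht).trans hbound

section IteratedIntegrals

variable {ψ : ℝ → ℝ} {α T t : ℝ}

theorem primitive_mono_of_nonneg (hψ : ContinuousOn ψ (Icc α T))
    (hψ0 : ∀ t ∈ Icc α T, 0 ≤ ψ t) {s : ℝ} (hs : α ≤ s) (hst : s ≤ t) (ht : t ≤ T) :
    ∫ r in α..s, ψ r ≤ ∫ r in α..t, ψ r :=
  integral_mono_interval le_rfl hs hst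
    (ae_restrict_of_forall_mem measurableSet_Ioc fun r hr => hψ0 r ⟨hr.1.le, hr.2.trans ht⟩)
    ((hψ.mono (Icc_subset_Icc_right ht)).intervalIntegrable_of_Icc (hs.trans hst))

theorem triple_integral_le_of_nonneg (hψ : ContinuousOn ψ (Icc α T))
    (hψ0 : ∀ t ∈ Icc α T, 0 ≤ ψ t) (ht : t ∈ Icc α T) :
    ∫ s in α..t, ∫ r in α..s, ∫ τ in α..r, ψ τ ≤ (T - α) ^ 2 * ∫ s in α..t, ψ s := by
  have hTα : 0 ≤ T - α := sub_nonneg.2 (ht.1.trans ht.2)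
  have hI : 0 ≤ ∫ s in α..t, ψ s :=
    integral_nonneg ht.1 fun s hs => hψ0 s ⟨hs.1, hs.2.trans ht.2⟩
  have hinner : ∀ s ∈ Icc α t, ∫ r in α..s, ∫ τ in α..r, ψ τ ≤ (T - α) * ∫ s in α..t, ψ s := by
    intro s hs
    calc ∫ r in α..s, ∫ τ in α..r, ψ τ ≤ (s - α) * ∫ s in α..t, ψ s :=
          integral_le_sub_mul_of_le hs.1 hI fun r hr =>
            primitive_mono_of_nonneg hψ hψ0 hr.1 (hr.2.trans hs.2) ht.2
      _ ≤ (T - α) * ∫ s in α..t, ψ s := by gcongr; linarith [hs.2, ht.2]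
  calc _ ≤ (t - α) * ((T - α) * ∫ s in α..t, ψ s) :=
        integral_le_sub_mul_of_le ht.1 (by positivity) hinner
    _ ≤ (T - α) * ((T - α) * ∫ s in α..t, ψ s) := by gcongr; exact ht.2
    _ = (T - α) ^ 2 * ∫ s in α..t, ψ s := by ring

theorem double_integral_add_const_le (hψ : ContinuousOn ψ (Icc α T))
    (hψ0 : ∀ t ∈ Icc α T, 0 ≤ ψ t) (ht : t ∈ Icc α T) {c : ℝ} (hc : 0 ≤ c) :
    ∫ s in α..t, ∫ r in α..s, (ψ r + c) ≤ (T - α) * ((∫ s in α..t, ψ s) + (T - α) * c) := by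
  have hTα : 0 ≤ T - α := sub_nonneg.2 (ht.1.trans ht.2)
  have hI : 0 ≤ ∫ s in α..t, ψ s :=
    integral_nonneg ht.1 fun s hs => hψ0 s ⟨hs.1, hs.2.trans ht.2⟩
  have hinner : ∀ s ∈ Icc α t, ∫ r in α..s, (ψ r + c) ≤ (∫ s in α..t, ψ s) + (T - α) * c := by
    intro s hs
    rw [integral_add ((hψ.mono (Icc_subset_Icc_right (hs.2.trans ht.2))).intervalIntegrable_of_Icc
      hs.1) intervalIntegrable_const, intervalIntegral.integral_const, smul_eq_mul]
    gcongr
    · exact primitive_mono_of_nonneg hψ hψ0 hs.1 hs.2 ht.2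
    · linarith [hs.2, ht.2]
  calc _ ≤ (t - α) * ((∫ s in α..t, ψ s) + (T - α) * c) :=
        integral_le_sub_mul_of_le ht.1 (by positivity) hinner
    _ ≤ (T - α) * ((∫ s in α..t, ψ s) + (T - α) * c) := by gcongr; exact ht.2

theorem le_add_mul_primitive_of_iterated {L C : ℝ} (hL : 0 ≤ L) (hψ : ContinuousOn ψ (Icc α T))
    (hψ0 : ∀ t ∈ Icc α T, 0 ≤ ψ t) (ht : t ∈ Icc α T)
    (h : ψ t ≤ C + L * ∫ s in α..t, (ψ s + L * ∫ s in α..t, ∫ r in α..s,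
      (ψ r + L * ∫ s in α..t, ∫ r in α..s, ∫ τ in α..r, ψ τ))) :
    ψ t ≤ C + (L + L ^ 2 * (T - α) ^ 2 + L ^ 3 * (T - α) ^ 5) * ∫ s in α..t, ψ s := by
  have hTα : 0 ≤ T - α := sub_nonneg.2 (ht.1.trans ht.2)
  have hψ0' : ∀ s ∈ Icc α t, 0 ≤ ψ s := fun s hs => hψ0 s ⟨hs.1, hs.2.trans ht.2⟩
  set I := ∫ s in α..t, ψ s
  set E := ∫ s in α..t, ∫ r in α..s, ∫ τ in α..r, ψ τ
  set J := ∫ s in α..t, ∫ r in α..s, (ψ r + L * E)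
  have hI : 0 ≤ I := integral_nonneg ht.1 hψ0'
  have hE : 0 ≤ E := integral_nonneg ht.1 fun s hs => integral_nonneg hs.1 fun r hr =>
    integral_nonneg hr.1 fun τ hτ => hψ0' τ ⟨hτ.1, hτ.2.trans (hr.2.trans hs.2)⟩
  have hJ : 0 ≤ J := integral_nonneg ht.1 fun s hs => integral_nonneg hs.1 fun r hr =>
    add_nonneg (hψ0' r ⟨hr.1, hr.2.trans hs.2⟩) (mul_nonneg hL hE)
  have houter : ∫ s in α..t, (ψ s + L * J) = I + (t - α) * (L * J) := by
    rw [integral_add ((hψ.mono (Icc_subset_Icc_right ht.2)).intervalIntegrable_of_Icc ht.1)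
      intervalIntegrable_const, intervalIntegral.integral_const, smul_eq_mul]
  have hJle : J ≤ (T - α) * (I + (T - α) * (L * E)) :=
    double_integral_add_const_le hψ hψ0 ht (mul_nonneg hL hE)
  have hEle : E ≤ (T - α) ^ 2 * I := triple_integral_le_of_nonneg hψ hψ0 ht
  have hJle' : J ≤ (T - α) * (I + (T - α) * (L * ((T - α) ^ 2 * I))) := hJle.trans (by gcongr)
  calc ψ t ≤ C + L * (I + (t - α) * (L * J)) := houter ▸ h
    _ ≤ C + L * (I + (T - α) * (L * ((T - α) * (I + (T - α) * (L * ((T - α) ^ 2 * I)))))) := by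
        gcongr
        exact ht.2
    _ = C + (L + L ^ 2 * (T - α) ^ 2 + L ^ 3 * (T - α) ^ 5) * I := by ring

end IteratedIntegrals

theorem stmt_3_general (L : ℝ) (hL : 0 ≤ L) (α T : ℝ) :
    ∃ K : ℝ, ∀ (C : ℝ) (ψ : ℝ → ℝ), 0 ≤ C →
      ContinuousOn ψ (Icc α T) → (∀ t ∈ Icc α T, 0 ≤ ψ t) →
      (∀ t ∈ Icc α T, ψ t ≤ C + L * ∫ s in α..t, ψ s
        + L * ∫ s in α..t, ∫ r in α..s, ψ r
        + L * ∫ s in α..t, ∫ r in α..s, ∫ τ in α..r, ψ τ) →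
      ∀ t ∈ Icc α T, ψ t ≤ K * C := by
  set M := L + L ^ 2 * (T - α) ^ 2 + L ^ 3 * (T - α) ^ 5
  refine ⟨exp (M * (T - α)), fun C ψ hC hψ hψ0 hineq t ht => ?_⟩
  have hM : 0 ≤ M := by
    have : 0 ≤ T - α := sub_nonneg.2 (ht.1.trans ht.2)
    positivity
  have hlinear : ∀ s ∈ Icc α T, ψ s ≤ C + M * ∫ r in α..s, ψ r := fun s hs =>
    le_add_mul_primitive_of_iterated hL hψ hψ0 hs (hineq s hs)
  calc ψ t ≤ C * exp (M * (t - α)) := le_mul_exp_of_le_add_mul_integral hM hψ hlinear t ht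
    _ ≤ exp (M * (T - α)) * C := by
        rw [mul_comm]
        gcongr
        exact ht.2

/-- Bykov-type Gronwall inequality with iterated integral terms: the constant
`K` depends only on `L` and the length `T − α` of the interval. -/
theorem stmt_3 (L : ℝ) (hL : 0 ≤ L) (α T : ℝ) (hαT : α ≤ T) :
    ∃ K : ℝ, ∀ (C : ℝ) (ψ : ℝ → ℝ), 0 ≤ C →
      ContinuousOn ψ (Icc α T) → (∀ t ∈ Icc α T, 0 ≤ ψ t) →
      (∀ t ∈ Icc α T, ψ t ≤ C + L * ∫ s in α..t, ψ s
        + L * ∫ s in α..t, ∫ r in α..s, ψ r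
        + L * ∫ s in α..t, ∫ r in α..s, ∫ τ in α..r, ψ τ) →
      ∀ t ∈ Icc α T, ψ t ≤ K * C :=
  stmt_3_general L hL α T
end

section
/- Let (K_n)_{n∈ℕ} be the compact exhaustion K_n = [−aπ/2, n·aπ/2] of [−aπ/2, ∞), and suppose for each n there exists ε_n > 0 and, for each 0 < ε ≤ ε_n, a function γ_ε^{(n)} : K_n → ℝ⁵ solving a fixed ODE system with fixed initial data at a point of K₁, such that solutions are unique: if γ solves on K_n then its restriction to K_m (m ≤ n) coincides with γ^{(m)}_ε. Then there exists a family (γ_ε)_{ε ∈ (0,1]} of functions defined on all of [−aπ/2, ∞) such that for every compact K ⊂ [−aπ/2, ∞) there is ε_K > 0 with γ_ε solving the ODE system on K for all 0 < ε ≤ ε_K. -/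
/-!
The thresholds `ε_n` need not be monotone, and a single `ε` may lie below infinitely many of
them, so one cannot simply pick "the" level of `ε`. After shrinking the admissible sets of the
levels `n` so that they decrease and eventually exclude every `ε > 0`, each `ε` has a largest
admissible level `N(ε)`; take for `γ_ε` a solution on `K_{N(ε)}`. For a compact `K ⊆ K_n`,
every `ε` admissible at level `n` has `N(ε) ≥ n`, so `γ_ε` solves the system on `K_n ⊇ K`.
-/

open Set Real Filter Topology

section Globalization

variable {α : Type*} [Nonempty α]

theorem exists_forall_eventually_of_forall_eventually_exists {ι : Type*} {l : Filter ι}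
    {P : ℕ → ι → α → Prop} {s : ℕ → Set ι} (hs : ∀ n, s n ∈ l) (hs_empty : ⋂ n, s n = ∅)
    (hP : ∀ ⦃m n⦄, m ≤ n → ∀ i x, P n i x → P m i x)
    (h : ∀ n, ∀ᶠ i in l, ∃ x, P n i x) :
    ∃ Γ : ι → α, ∀ n, ∀ᶠ i in l, P n i (Γ i) := by
  classical
  set Q : ℕ → ι → Prop := fun n i => ∀ k ≤ n, i ∈ s k ∧ ∃ x, P k i x
  have hQ_bdd (i : ι) : BddAbove {n | Q n i} := by
    obtain ⟨k, hk⟩ : ∃ k, i ∉ s k :=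
      not_forall.1 fun hi => eq_empty_iff_forall_notMem.1 hs_empty i (mem_iInter.2 hi)
    exact ⟨k, fun n hn => not_lt.1 fun hkn => hk (hn k hkn.le).1⟩
  have hQ (n : ℕ) : ∀ᶠ i in l, Q n i :=
    (eventually_all_finite (finite_Iic n)).2 fun k _ => (eventually_mem_set.2 (hs k)).and (h k)
  let N (i : ι) : ℕ := sSup {n | Q n i}
  refine ⟨fun i => if hx : ∃ x, P (N i) i x then hx.choose else Classical.arbitrary α,
    fun n => ?_⟩
  filter_upwards [hQ n] with i hi
  have hN : Q (N i) i := Nat.sSup_mem (s := {n | Q n i}) ⟨n, hi⟩ (hQ_bdd i)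
  have hx : ∃ x, P (N i) i x := (hN _ le_rfl).2
  rw [dif_pos hx]
  exact hP (le_csSup (hQ_bdd i) hi) _ _ hx.choose_spec

theorem exists_forall_eventually_nhdsGT_zero_of_forall_eventually_exists
    {P : ℕ → ℝ → α → Prop} (hP : ∀ ⦃m n⦄, m ≤ n → ∀ ε x, P n ε x → P m ε x)
    (h : ∀ n, ∀ᶠ ε in 𝓝[>] 0, ∃ x, P n ε x) :
    ∃ Γ : ℝ → α, ∀ n, ∀ᶠ ε in 𝓝[>] 0, P n ε (Γ ε) := by
  refine exists_forall_eventually_of_forall_eventually_exists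
    (s := fun n : ℕ => Ioo 0 (1 / ((n : ℝ) + 1)))
    (fun n => Ioo_mem_nhdsGT (by positivity)) ?_ hP h
  refine eq_empty_iff_forall_notMem.2 fun ε hε => ?_
  have hε : ∀ n : ℕ, ε ∈ Ioo 0 (1 / ((n : ℝ) + 1)) := mem_iInter.1 hε
  obtain ⟨n, hn⟩ := exists_nat_one_div_lt (hε 0).1
  exact (hε n).2.not_gt hn

end Globalization

theorem BddAbove.exists_subset_Icc_natCast_mul {𝕜 : Type*} [Field 𝕜] [LinearOrder 𝕜]
    [IsStrictOrderedRing 𝕜] [Archimedean 𝕜] {L : Set 𝕜} (hL : BddAbove L) {b c : 𝕜}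
    (hc : 0 < c) (hLb : L ⊆ Ici b) : ∃ n : ℕ, L ⊆ Icc b (n * c) := by
  obtain ⟨M, hM⟩ := hL
  obtain ⟨n, hn⟩ := exists_nat_ge (M / c)
  exact ⟨n, fun t ht => ⟨hLb ht, (hM ht).trans ((div_le_iff₀ hc).1 hn)⟩⟩

theorem stmt_16_general (a : ℝ) (ha : 0 < a)
    (SolAt : ℝ → (ℝ → Fin 5 → ℝ) → ℝ → Prop)
    (hex : ∀ n : ℕ, ∃ εn > (0:ℝ), ∀ ε, 0 < ε → ε ≤ εn →
      ∃ γ : ℝ → Fin 5 → ℝ, ∀ t ∈ Icc (-(a * π) / 2) (n * (a * π) / 2), SolAt ε γ t) :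
    ∃ Γ : ℝ → ℝ → Fin 5 → ℝ, ∀ K : Set ℝ, IsCompact K → K ⊆ Ici (-(a * π) / 2) →
      ∃ εK > (0:ℝ), ∀ ε, 0 < ε → ε ≤ εK → ∀ t ∈ K, SolAt ε (Γ ε) t := by
  have haπ : 0 < a * π := mul_pos ha pi_pos
  set Kn : ℕ → Set ℝ := fun n => Icc (-(a * π) / 2) (n * (a * π) / 2)
  have hKn_mono : Monotone Kn := fun m n hmn => Icc_subset_Icc_right (by gcongr)
  have hex' (n : ℕ) : ∀ᶠ ε in 𝓝[>] 0, ∃ γ, ∀ t ∈ Kn n, SolAt ε γ t := by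
    obtain ⟨εn, hεn, hsol⟩ := hex n
    exact (nhdsGT_basis_Ioc 0).eventually_iff.2 ⟨εn, hεn, fun ε hε => hsol ε hε.1 hε.2⟩
  obtain ⟨Γ, hΓ⟩ := exists_forall_eventually_nhdsGT_zero_of_forall_eventually_exists
    (fun m n hmn ε γ hγ t ht => hγ t (hKn_mono hmn ht)) hex'
  refine ⟨Γ, fun K hK hK_sub => ?_⟩
  obtain ⟨n, hn⟩ := hK.bddAbove.exists_subset_Icc_natCast_mul (half_pos haπ) hK_sub
  rw [← mul_div_assoc] at hn
  obtain ⟨εK, hεK, hsol⟩ := (nhdsGT_basis_Ioc 0).eventually_iff.1 (hΓ n)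
  exact ⟨εK, hεK, fun ε hε hεK t ht => hsol ⟨hε, hεK⟩ t (hn ht)⟩

/-- Globalization: if for each `n` there is a threshold `ε_n > 0` below which
unique solutions exist on the compact exhaustion `K_n = [−aπ/2, n·aπ/2]`, then
there is a single family `(γ_ε)` defined on all of `[−aπ/2, ∞)` solving the
system on every compact set for all sufficiently small `ε`. -/
theorem stmt_16 (a : ℝ) (ha : 0 < a)
    (SolAt : ℝ → (ℝ → Fin 5 → ℝ) → ℝ → Prop)
    (huniq : ∀ (ε : ℝ) (γ γ' : ℝ → Fin 5 → ℝ) (s : Set ℝ),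
      (∀ t ∈ s, SolAt ε γ t) → (∀ t ∈ s, SolAt ε γ' t) → Set.EqOn γ γ' s)
    (hex : ∀ n : ℕ, ∃ εn > (0:ℝ), ∀ ε, 0 < ε → ε ≤ εn →
      ∃ γ : ℝ → Fin 5 → ℝ, ∀ t ∈ Icc (-(a * π) / 2) (n * (a * π) / 2), SolAt ε γ t) :
    ∃ Γ : ℝ → ℝ → Fin 5 → ℝ, ∀ K : Set ℝ, IsCompact K → K ⊆ Ici (-(a * π) / 2) →
      ∃ εK > (0:ℝ), ∀ ε, 0 < ε → ε ≤ εK → ∀ t ∈ K, SolAt ε (Γ ε) t :=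
  stmt_16_general a ha SolAt hex
end
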